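/- arXiv:2206.07018 — 2 statements merged into one kernel-verified Lean document; each statement's English description precedes it below -/
import Mathlib

section
/- Let P_real = P1 be probability measures on R^d, and suppose the discriminator class contains a function D* : R^d → [0,1] with D*(x) = 1 for all x in the support of P_real and D*(x) = 0 on a measurable set S with P2(S) ≥ 1 − q'. If G induces P_G = (1−q)P1 + qP2 with q ∈ (0,1), then E_{P1}[D*] − E_{P2}[D*] ≥ 1 − q', and consequently no discriminator D forms an ε-approximate pure equilibrium with G for any ε < (1/2)·q·(1 − q'). -/
/-! Since `D*` attains its best payoff `1` on `P1 = P_real` and is `0` on most of `P2`, switching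
the discriminator to `D*` against the mixture gains `q (E_{P1}[D*] - E_{P2}[D*]) ≥ q (1 - q')`,
while switching the generator to `P1` brings the payoff of any discriminator down to `0`. An
`ε`-approximate equilibrium bounds the sum of these two gains by `2ε`. -/

open MeasureTheory

/-- The (topological) support of a measure: points all of whose neighborhoods have
positive measure. -/
def measureSupport {d : ℕ} (μ : Measure (EuclideanSpace ℝ (Fin d))) :
    Set (EuclideanSpace ℝ (Fin d)) :=
  {x | ∀ U ∈ nhds x, μ U ≠ 0}

section Support

variable {d : ℕ} (μ : Measure (EuclideanSpace ℝ (Fin d)))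

theorem measureSupport_eq_support : measureSupport μ = μ.support := by
  ext x
  simp only [measureSupport, Set.mem_ofPred_eq, Measure.mem_support_iff_forall, pos_iff_ne_zero]

theorem ae_mem_measureSupport : ∀ᵐ x ∂μ, x ∈ measureSupport μ := by
  rw [measureSupport_eq_support]
  exact Measure.support_mem_ae

theorem integral_eq_of_eq_on_measureSupport [IsProbabilityMeasure μ]
    {f : EuclideanSpace ℝ (Fin d) → ℝ} {c : ℝ} (hf : ∀ x ∈ measureSupport μ, f x = c) :
    ∫ x, f x ∂μ = c := by
  rw [integral_congr_ae ((ae_mem_measureSupport μ).mono hf), integral_const, probReal_univ,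
    one_smul]

end Support

section Integrals

variable {α : Type*} [MeasurableSpace α]

theorem integrable_of_mem_Icc {μ : Measure α} [IsFiniteMeasure μ] {f : α → ℝ}
    (hm : Measurable f) (hf : ∀ x, f x ∈ Set.Icc (0 : ℝ) 1) : Integrable f μ :=
  .of_bound hm.aestronglyMeasurable 1 <| .of_forall fun x ↦ by
    rw [Real.norm_of_nonneg (hf x).1]
    exact (hf x).2

theorem integral_le_measureReal_compl {μ : Measure α} [IsFiniteMeasure μ] {f : α → ℝ}
    {S : Set α} (hS : MeasurableSet S) (hint : Integrable f μ) (hle : ∀ x, f x ≤ 1)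
    (hzero : ∀ x ∈ S, f x = 0) : ∫ x, f x ∂μ ≤ μ.real Sᶜ := by
  have hind : ∀ x, f x ≤ Sᶜ.indicator 1 x := fun x ↦ by
    by_cases hx : x ∈ S
    · simp [hzero x hx, hx]
    · simp [hx, hle x]
  calc ∫ x, f x ∂μ ≤ ∫ x, Sᶜ.indicator 1 x ∂μ :=
        integral_mono hint ((integrable_const 1).indicator hS.compl) hind
    _ = μ.real Sᶜ := integral_indicator_one hS.compl

theorem measureReal_compl_le_of_ofReal_one_sub_le {μ : Measure α} [IsProbabilityMeasure μ]
    {S : Set α} (hS : MeasurableSet S) {r : ℝ} (h : ENNReal.ofReal (1 - r) ≤ μ S) :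
    μ.real Sᶜ ≤ r := by
  rw [ENNReal.ofReal_le_iff_le_toReal (measure_ne_top μ S)] at h
  rw [probReal_compl_eq_one_sub hS]
  linarith [measureReal_def μ S]

theorem integral_ofReal_smul_add_ofReal_smul {μ ν : Measure α} {f : α → ℝ}
    (hμ : Integrable f μ) (hν : Integrable f ν) {a b : ℝ} (ha : 0 ≤ a) (hb : 0 ≤ b) :
    ∫ x, f x ∂(ENNReal.ofReal a • μ + ENNReal.ofReal b • ν) =
      a * ∫ x, f x ∂μ + b * ∫ x, f x ∂ν := by
  rw [integral_add_measure (hμ.smul_measure ENNReal.ofReal_ne_top)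
      (hν.smul_measure ENNReal.ofReal_ne_top), integral_smul_measure, integral_smul_measure,
    ENNReal.toReal_ofReal ha, ENNReal.toReal_ofReal hb, smul_eq_mul, smul_eq_mul]

end Integrals

theorem not_exists_approx_equilibrium {α β : Type*} (F : α → β → ℝ) {A : Set α} {B : Set β}
    {a a' : α} {b b' : β} (ha' : a' ∈ A) (hb' : b' ∈ B) {ε : ℝ}
    (hgain : 2 * ε < F a' b - F a b') :
    ¬ ∃ V : ℝ, (∀ x ∈ A, F x b ≤ V + ε) ∧ (∀ y ∈ B, F a y ≥ V - ε) := by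
  rintro ⟨V, hA, hB⟩
  linarith [hA a' ha', hB b' hb']

theorem no_equilibrium_for_backdoored_generator_general {d : ℕ}
    (Preal P1 P2 : Measure (EuclideanSpace ℝ (Fin d)))
    [IsProbabilityMeasure P1] [IsProbabilityMeasure P2]
    (hPP : Preal = P1)
    (q q' : ℝ) (hq : q ∈ Set.Ioo (0:ℝ) 1)
    (S : Set (EuclideanSpace ℝ (Fin d))) (hSmeas : MeasurableSet S)
    (hPS : ENNReal.ofReal (1 - q') ≤ P2 S)
    (Dclass : Set (EuclideanSpace ℝ (Fin d) → ℝ))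
    (hDclass : ∀ D ∈ Dclass,
      Measurable D ∧ (∀ x, D x ∈ Set.Icc (0:ℝ) 1) ∧ LipschitzWith 1 D)
    (Gmeasures : Set (Measure (EuclideanSpace ℝ (Fin d))))
    (hGstar : P1 ∈ Gmeasures)
    (Dstar : EuclideanSpace ℝ (Fin d) → ℝ)
    (hDstarMem : Dstar ∈ Dclass)
    (hDstarOne : ∀ x ∈ measureSupport Preal, Dstar x = 1)
    (hDstarZero : ∀ x ∈ S, Dstar x = 0) :
    ((∫ x, Dstar x ∂P1) - (∫ x, Dstar x ∂P2) ≥ 1 - q') ∧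
    (∀ D ∈ Dclass, ∀ ε : ℝ, ε < (1 / 2) * q * (1 - q') →
      ¬ ∃ V : ℝ,
        (∀ D' ∈ Dclass,
          (∫ x, D' x ∂Preal)
            - (∫ x, D' x ∂(ENNReal.ofReal (1 - q) • P1 + ENNReal.ofReal q • P2)) ≤ V + ε) ∧
        (∀ μ ∈ Gmeasures,
          (∫ x, D x ∂Preal) - (∫ x, D x ∂μ) ≥ V - ε)) := by
  subst hPP
  obtain ⟨hmeas, h01, -⟩ := hDclass Dstar hDstarMem
  have hint : ∀ μ : Measure (EuclideanSpace ℝ (Fin d)), [IsFiniteMeasure μ] →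
      Integrable Dstar μ := fun _ _ ↦ integrable_of_mem_Icc hmeas h01
  have hP1 : ∫ x, Dstar x ∂Preal = 1 := integral_eq_of_eq_on_measureSupport Preal hDstarOne
  have hP2 : ∫ x, Dstar x ∂P2 ≤ q' :=
    (integral_le_measureReal_compl hSmeas (hint P2) (fun x ↦ (h01 x).2) hDstarZero).trans
      (measureReal_compl_le_of_ofReal_one_sub_le hSmeas hPS)
  refine ⟨by linarith, fun D _ ε hε ↦ ?_⟩
  refine not_exists_approx_equilibrium (fun D μ ↦ (∫ x, D x ∂Preal) - ∫ x, D x ∂μ)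
    hDstarMem hGstar ?_
  rw [integral_ofReal_smul_add_ofReal_smul (hint Preal) (hint P2) (by linarith [hq.2]) hq.1.le,
    hP1, sub_self]
  nlinarith [mul_le_mul_of_nonneg_left hP2 hq.1.le]

/-- with `P_real = P1` and an optimal discriminator `D*` equal to 1 on the
support of `P_real` and 0 on a set `S` with `P2(S) ≥ 1 - q'`, we have
`E_{P1}[D*] - E_{P2}[D*] ≥ 1 - q'`, and no discriminator in the class forms an
ε-approximate pure equilibrium with the mixture generator for any `ε < (1/2) q (1-q')`. -/
theorem no_equilibrium_for_backdoored_generator {d : ℕ}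
    (Preal P1 P2 : Measure (EuclideanSpace ℝ (Fin d)))
    [IsProbabilityMeasure Preal] [IsProbabilityMeasure P1] [IsProbabilityMeasure P2]
    (hPP : Preal = P1)
    (q q' : ℝ) (hq : q ∈ Set.Ioo (0:ℝ) 1) (hq' : q' ∈ Set.Icc (0:ℝ) 1)
    (S : Set (EuclideanSpace ℝ (Fin d))) (hSmeas : MeasurableSet S)
    (hPS : ENNReal.ofReal (1 - q') ≤ P2 S)
    (Dclass : Set (EuclideanSpace ℝ (Fin d) → ℝ))
    (hDclass : ∀ D ∈ Dclass,
      Measurable D ∧ (∀ x, D x ∈ Set.Icc (0:ℝ) 1) ∧ LipschitzWith 1 D)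
    (Gmeasures : Set (Measure (EuclideanSpace ℝ (Fin d))))
    (hGmix : (ENNReal.ofReal (1 - q) • P1 + ENNReal.ofReal q • P2) ∈ Gmeasures)
    (hGstar : P1 ∈ Gmeasures)
    (Dstar : EuclideanSpace ℝ (Fin d) → ℝ)
    (hDstarMem : Dstar ∈ Dclass)
    (hDstarOne : ∀ x ∈ measureSupport Preal, Dstar x = 1)
    (hDstarZero : ∀ x ∈ S, Dstar x = 0) :
    ((∫ x, Dstar x ∂P1) - (∫ x, Dstar x ∂P2) ≥ 1 - q') ∧
    (∀ D ∈ Dclass, ∀ ε : ℝ, ε < (1 / 2) * q * (1 - q') →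
      ¬ ∃ V : ℝ,
        (∀ D' ∈ Dclass,
          (∫ x, D' x ∂Preal)
            - (∫ x, D' x ∂(ENNReal.ofReal (1 - q) • P1 + ENNReal.ofReal q • P2)) ≤ V + ε) ∧
        (∀ μ ∈ Gmeasures,
          (∫ x, D x ∂Preal) - (∫ x, D x ∂μ) ≥ V - ε)) :=
  no_equilibrium_for_backdoored_generator_general Preal P1 P2 hPP q q' hq S hSmeas hPS Dclass
    hDclass Gmeasures hGstar Dstar hDstarMem hDstarOne hDstarZero
end

section
/- Let G : R^p → R^d be L-Lipschitz and let C ⊆ R^d. Define S_OOD = {x ∈ R^d : dist(x, C) ≥ 1}. Suppose there exists h₀ ∈ R^p with ‖h₀‖ ≤ B − 1/L and dist(G(h₀), C) ≥ 2. Then the closed ball of radius 1/L around h₀ is mapped by G entirely into S_OOD, and hence for Z ~ N(0, I_p), P(G(Z) ∈ S_OOD) ≥ (1/(L√2))^p · exp(−B²/2)/Γ(p/2+1). -/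
open MeasureTheory

/-- The standard Gaussian measure on `ℝ^p`, defined by its density
`(2π)^{-p/2} exp(-‖x‖²/2)` with respect to Lebesgue measure. -/
noncomputable def stdGaussian (p : ℕ) : Measure (EuclideanSpace ℝ (Fin p)) :=
  (volume : Measure (EuclideanSpace ℝ (Fin p))).withDensity
    (fun x => ENNReal.ofReal ((2 * Real.pi) ^ (-(p : ℝ) / 2) * Real.exp (-‖x‖ ^ 2 / 2)))

/-- if an L-Lipschitz generator maps some low-norm latent point at
distance ≥ 2 from `C`, then the ball of radius `1/L` around it is mapped into
`S_OOD = {x : dist(x, C) ≥ 1}` and the Gaussian pushforward mass of `S_OOD` is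
bounded below. -/
theorem generator_ood_mass_lower_bound {p d : ℕ}
    (G : EuclideanSpace ℝ (Fin p) → EuclideanSpace ℝ (Fin d))
    (L B : ℝ) (hL : 0 < L) (hB : 0 < B)
    (hLip : LipschitzWith (Real.toNNReal L) G)
    (C : Set (EuclideanSpace ℝ (Fin d)))
    (h₀ : EuclideanSpace ℝ (Fin p))
    (hnorm : ‖h₀‖ ≤ B - 1 / L)
    (hfar : 2 ≤ Metric.infDist (G h₀) C) :
    G '' Metric.closedBall h₀ (1 / L) ⊆ {x | 1 ≤ Metric.infDist x C} ∧
    ENNReal.ofReal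
        ((1 / (L * Real.sqrt 2)) ^ p * Real.exp (-B ^ 2 / 2) / Real.Gamma ((p : ℝ) / 2 + 1))
      ≤ (stdGaussian p).map G {x | 1 ≤ Metric.infDist x C} := by
  have hLne : L ≠ 0 := hL.ne'
  have hsub : G '' Metric.closedBall h₀ (1 / L) ⊆ {x | 1 ≤ Metric.infDist x C} := by
    rintro x ⟨h', hh', rfl⟩
    have hd : dist (G h') (G h₀) ≤ 1 := by
      have h1 := hLip.dist_le_mul h' h₀
      rw [Real.coe_toNNReal L hL.le] at h1
      calc dist (G h') (G h₀) ≤ L * dist h' h₀ := h1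
        _ ≤ L * (1 / L) := mul_le_mul_of_nonneg_left (Metric.mem_closedBall.mp hh') hL.le
        _ = 1 := by field_simp
    have h2 : Metric.infDist (G h₀) C ≤ Metric.infDist (G h') C + dist (G h₀) (G h') :=
      Metric.infDist_le_infDist_add_dist
    rw [dist_comm] at h2
    simp only [Set.mem_setOf_eq]
    linarith
  refine ⟨hsub, ?_⟩
  have hGc : Continuous G := hLip.continuous
  have hS : MeasurableSet {x | 1 ≤ Metric.infDist x C} :=
    (isClosed_le continuous_const (Metric.continuous_infDist_pt C)).measurableSet
  rw [Measure.map_apply hGc.measurable hS]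
  have hsub' : Metric.closedBall h₀ (1 / L) ⊆ G ⁻¹' {x | 1 ≤ Metric.infDist x C} :=
    fun x hx => hsub ⟨x, hx, rfl⟩
  refine le_trans ?_ (measure_mono hsub')
  rcases Nat.eq_zero_or_pos p with hp | hp
  · subst hp
    have huniv : Metric.closedBall h₀ (1 / L) = Set.univ := by
      ext x
      have hx0 : dist x h₀ = 0 := by rw [Subsingleton.elim x h₀, dist_self]
      simp only [Metric.mem_closedBall, hx0, Set.mem_univ, iff_true]
      positivity
    have hvol : (volume : Measure (EuclideanSpace ℝ (Fin 0))) Set.univ = 1 := by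
      have h := (EuclideanSpace.volume_preserving_symm_measurableEquiv_toLp (Fin 0)).measure_preimage
        (MeasurableSet.univ.nullMeasurableSet)
      simpa [volume_pi] using h
    rw [huniv, stdGaussian, withDensity_apply _ MeasurableSet.univ, Measure.restrict_univ]
    have hfun : ∀ x : EuclideanSpace ℝ (Fin 0),
        ENNReal.ofReal ((2 * Real.pi) ^ (-(0 : ℕ) / 2 : ℝ) * Real.exp (-‖x‖ ^ 2 / 2)) = 1 := by
      intro x
      have hx : ‖x‖ = 0 := by simp [Subsingleton.elim x 0]
      simp [hx]
    calc ENNReal.ofReal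
          ((1 / (L * Real.sqrt 2)) ^ 0 * Real.exp (-B ^ 2 / 2) / Real.Gamma ((0 : ℕ) / 2 + 1))
        ≤ 1 := by
          apply ENNReal.ofReal_le_one.mpr
          have : Real.exp (-B ^ 2 / 2) ≤ 1 :=
            Real.exp_le_one_iff.mpr (by nlinarith)
          simpa [Real.Gamma_one] using this
      _ = ∫⁻ x : EuclideanSpace ℝ (Fin 0),
            ENNReal.ofReal ((2 * Real.pi) ^ (-(0 : ℕ) / 2 : ℝ) * Real.exp (-‖x‖ ^ 2 / 2)) := by
          rw [lintegral_congr hfun, lintegral_one, hvol]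
  · haveI : Nonempty (Fin p) := ⟨⟨0, hp⟩⟩
    rw [stdGaussian, withDensity_apply _ measurableSet_closedBall]
    set c : ℝ := (2 * Real.pi) ^ (-(p : ℝ) / 2) * Real.exp (-B ^ 2 / 2) with hc
    have hpi : (0:ℝ) < 2 * Real.pi := by positivity
    have hcnn : 0 ≤ c := by positivity
    have key : ∀ x ∈ Metric.closedBall h₀ (1 / L),
        ENNReal.ofReal c
          ≤ ENNReal.ofReal ((2 * Real.pi) ^ (-(p : ℝ) / 2) * Real.exp (-‖x‖ ^ 2 / 2)) := by
      intro x hx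
      apply ENNReal.ofReal_le_ofReal
      apply mul_le_mul_of_nonneg_left _ (Real.rpow_nonneg hpi.le _)
      apply Real.exp_le_exp.mpr
      have h3 : dist x h₀ ≤ 1 / L := Metric.mem_closedBall.mp hx
      have h4 : ‖x‖ - ‖h₀‖ ≤ ‖x - h₀‖ := norm_sub_norm_le x h₀
      rw [← dist_eq_norm] at h4
      have hxB : ‖x‖ ≤ B := by linarith
      have := norm_nonneg x
      nlinarith
    calc ENNReal.ofReal
          ((1 / (L * Real.sqrt 2)) ^ p * Real.exp (-B ^ 2 / 2) / Real.Gamma ((p : ℝ) / 2 + 1))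
        = ENNReal.ofReal c * volume (Metric.closedBall h₀ (1 / L)) := by
          rw [EuclideanSpace.volume_closedBall, Fintype.card_fin,
            ← ENNReal.ofReal_pow (by positivity : (0:ℝ) ≤ 1 / L),
            ← ENNReal.ofReal_mul (by positivity : (0:ℝ) ≤ (1/L)^p),
            ← ENNReal.ofReal_mul hcnn]
          congr 1
          have hΓ : 0 < Real.Gamma ((p : ℝ) / 2 + 1) :=
            Real.Gamma_pos_of_pos (by positivity)
          have hbase : (2 * Real.pi) ^ (-(p : ℝ) / 2) =
              ((Real.sqrt (2 * Real.pi))⁻¹) ^ p := by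
            rw [show (-(p : ℝ) / 2) = (-(1:ℝ)/2) * p by ring, Real.rpow_mul hpi.le,
              Real.rpow_natCast]
            congr 1
            rw [show (-(1:ℝ)/2) = -(1/2 : ℝ) by ring, Real.rpow_neg hpi.le,
              ← Real.sqrt_eq_rpow]
          rw [hc, hbase]
          have h2π : Real.sqrt (2 * Real.pi) = Real.sqrt 2 * Real.sqrt Real.pi :=
            Real.sqrt_mul (by norm_num) _
          have hπ : (0:ℝ) < Real.sqrt Real.pi := Real.sqrt_pos.mpr Real.pi_pos
          have h2 : (0:ℝ) < Real.sqrt 2 := by positivity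
          have hbaseq : (1 / (L * Real.sqrt 2))
              = (Real.sqrt (2 * Real.pi))⁻¹ * (1 / L * Real.sqrt Real.pi) := by
            rw [h2π]; field_simp
          rw [hbaseq, mul_pow, mul_pow]
          field_simp
      _ ≤ ∫⁻ x in Metric.closedBall h₀ (1 / L),
            ENNReal.ofReal ((2 * Real.pi) ^ (-(p : ℝ) / 2) * Real.exp (-‖x‖ ^ 2 / 2)) := by
          rw [← setLIntegral_const]
          exact setLIntegral_mono (by fun_prop) key
end
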